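/- Let w ∈ 𝔏^{α,p}(ℝ^{n+1}) with p > ρ > 1 and p > 1/α, and let w_*(x,t) = (M_x(w(·,t)^ρ)(x))^{1/ρ}, where M_x is the n-dimensional Hardy–Littlewood maximal operator in x. Then for almost every t ∈ ℝ, w_*(·,t) is an A₂(ℝ^n) weight with A₂ constant uniform in t. -/

import Mathlib

open MeasureTheory ENNReal

noncomputable section

/-- A cube in `ℝⁿ` with center `c` and side length `r`. -/
def cube (n : ℕ) (c : EuclideanSpace ℝ (Fin n)) (r : ℝ) : Set (EuclideanSpace ℝ (Fin n)) :=
  {x | ∀ i, |x i - c i| ≤ r / 2}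

/-- A cube in space-time `ℝⁿ × ℝ ≅ ℝ^{n+1}` with center `(c, τ)` and side length `r`. -/
def cubeP (n : ℕ) (c : EuclideanSpace ℝ (Fin n)) (τ r : ℝ) :
    Set (EuclideanSpace ℝ (Fin n) × ℝ) :=
  (cube n c r) ×ˢ Set.Icc (τ - r / 2) (τ + r / 2)

/-- The Morrey–Campanato norm on `ℝ^{n+1}` of a real function. -/
def morreyNormP (n : ℕ) (α p : ℝ) (w : EuclideanSpace ℝ (Fin n) × ℝ → ℝ) : ℝ≥0∞ :=
  ⨆ (c : EuclideanSpace ℝ (Fin n)) (τ : ℝ) (r : ℝ) (_ : 0 < r),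
    ENNReal.ofReal (r ^ α) * (ENNReal.ofReal (r ^ ((n : ℝ) + 1)))⁻¹ ^ (1 / p) *
      (∫⁻ z in cubeP n c τ r, ENNReal.ofReal (|w z| ^ p)) ^ (1 / p)

/-- The `n`-dimensional maximal function in the `x` variable at exponent `ρ`:
`w_*(x,t) = sup_{Q′ ∋ x} (|Q′|⁻¹ ∫_{Q′} |w(y,t)|^ρ dy)^{1/ρ}`, over cubes centered at `x`. -/
def xMaximal (n : ℕ) (ρ : ℝ) (w : EuclideanSpace ℝ (Fin n) × ℝ → ℝ)
    (x : EuclideanSpace ℝ (Fin n)) (t : ℝ) : ℝ≥0∞ :=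
  (⨆ (r : ℝ) (_ : 0 < r),
      (ENNReal.ofReal (r ^ (n : ℝ)))⁻¹ * ∫⁻ y in cube n x r,
        ENNReal.ofReal (|w (y, t)| ^ ρ)) ^ (1 / ρ)

/-- The Morrey–Campanato norm on `ℝ^{n+1}` of an `ℝ≥0∞`-valued function. -/
def morreyNormPE (n : ℕ) (α p : ℝ) (W : EuclideanSpace ℝ (Fin n) × ℝ → ℝ≥0∞) : ℝ≥0∞ :=
  ⨆ (c : EuclideanSpace ℝ (Fin n)) (τ : ℝ) (r : ℝ) (_ : 0 < r),
    ENNReal.ofReal (r ^ α) * (ENNReal.ofReal (r ^ ((n : ℝ) + 1)))⁻¹ ^ (1 / p) *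
      (∫⁻ z in cubeP n c τ r, W z ^ p) ^ (1 / p)

/-!
For every `f ≥ 0` and `0 < δ < 1`, the power `(M f) ^ δ` of the centred maximal function is an
`A₁` weight with a constant depending only on `n` and `δ` (Coifman–Rochberg), and `A₁` weights are
`A₂` weights with the same constant. Applied to `f = |w(·, t)| ^ ρ` and `δ = 1 / ρ` this gives the
bound for every `t`.

For the `A₁` bound on a cube `Q`, split `f` at `3Q`. Every cube around `x ∈ Q` that leaves `3Q` has
side larger than `Q`, so the far part of `f` contributes at most `2 ^ n * M f y` for every `y ∈ Q`.
The local part has `L¹` norm `≲ |Q| · M f y`, and Kolmogorov's inequality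
`∫_Q (M g) ^ δ ≲ |Q| ^ (1 - δ) ‖g‖₁ ^ δ`, which follows from the weak type `(1, 1)` bound for `M`
(Vitali covering), turns this into the required bound on the average of `(M f) ^ δ` over `Q`.
-/

namespace CubeMaximal

section Kolmogorov

variable {X : Type*} {δ : ℝ} {T : ℝ≥0∞}

lemma rpow_le_add_tsum_indicator (hδ : 0 < δ) (hT0 : T ≠ 0) (hTtop : T ≠ ⊤) {g : X → ℝ≥0∞}
    {E : ℕ → Set X} (hE : ∀ k, {x | 2 ^ k * T < g x} ⊆ E k) (x : X) :
    g x ^ δ ≤ T ^ δ + ∑' k, (E k).indicator (fun _ => (2 ^ (k + 1) * T) ^ δ) x := by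
  rcases le_or_gt (g x) T with hxT | hxT
  · exact (ENNReal.rpow_le_rpow hxT hδ.le).trans le_self_add
  refine le_add_left ?_
  rcases eq_or_ne (g x) ⊤ with htop | hne
  · calc g x ^ δ ≤ ∑' _ : ℕ, T ^ δ :=
          le_top.trans_eq (ENNReal.tsum_const_eq_top_of_ne_zero (by positivity)).symm
      _ ≤ _ := ENNReal.tsum_le_tsum fun k => by
          rw [Set.indicator_of_mem (hE k (show 2 ^ k * T < g x by rw [htop]; finiteness))]
          gcongr
          exact le_mul_of_one_le_left' (one_le_pow₀ one_le_two)
  have hex : ∃ j : ℕ, g x ≤ 2 ^ j * T := by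
    obtain ⟨N, hN⟩ := ENNReal.exists_nat_gt (ENNReal.div_ne_top hne hT0)
    refine ⟨N, (ENNReal.div_le_iff hT0 hTtop).1 (hN.le.trans ?_)⟩
    exact_mod_cast Nat.lt_two_pow_self.le
  obtain ⟨m, hm⟩ : ∃ m, Nat.find hex = m + 1 := Nat.exists_eq_succ_of_ne_zero fun h0 => by
    have := Nat.find_spec hex
    rw [h0, pow_zero, one_mul] at this
    exact this.not_gt hxT
  have hlt : 2 ^ m * T < g x := not_le.1 (Nat.find_min hex (by omega))
  calc g x ^ δ ≤ (2 ^ (m + 1) * T) ^ δ := ENNReal.rpow_le_rpow (hm ▸ Nat.find_spec hex) hδ.le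
    _ = (E m).indicator (fun _ => (2 ^ (m + 1) * T) ^ δ) x :=
        (Set.indicator_of_mem (hE m hlt) (fun _ => (2 ^ (m + 1) * T) ^ δ)).symm
    _ ≤ _ := ENNReal.le_tsum m

lemma two_pow_succ_rpow_mul_inv_two_pow (δ : ℝ) (k : ℕ) :
    ((2 : ℝ≥0∞) ^ (k + 1)) ^ δ * ((2 : ℝ≥0∞) ^ k)⁻¹ = 2 ^ δ * (2 ^ (δ - 1)) ^ k := by
  rw [← ENNReal.rpow_natCast (2 : ℝ≥0∞) (k + 1), ← ENNReal.rpow_natCast (2 : ℝ≥0∞) k,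
    ← ENNReal.rpow_mul, ← ENNReal.rpow_neg, ← ENNReal.rpow_add _ _ two_ne_zero ENNReal.ofNat_ne_top,
    ← ENNReal.rpow_natCast (2 ^ (δ - 1)) k, ← ENNReal.rpow_mul,
    ← ENNReal.rpow_add _ _ two_ne_zero ENNReal.ofNat_ne_top]
  congr 1
  push_cast
  ring

/-- Kolmogorov's inequality, by summing the weak type bound over the dyadic levels `2 ^ k * T`.
The factor `(1 - 2 ^ (δ - 1))⁻¹` is `⊤` for `δ ≥ 1` (truncated subtraction). -/
theorem setLIntegral_rpow_le_of_weakType [MeasurableSpace X] {μ : Measure X} {g : X → ℝ≥0∞}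
    {K B : ℝ≥0∞}
    (hweak : ∀ l : ℝ≥0∞, l ≠ 0 → l ≠ ⊤ → μ {x | l < g x} ≤ K * l⁻¹ * B)
    (hδ0 : 0 < δ) {S : Set X} (hT0 : T ≠ 0) (hTtop : T ≠ ⊤) :
    ∫⁻ x in S, g x ^ δ ∂μ ≤
      T ^ δ * μ S + K * 2 ^ δ * T ^ δ * (T⁻¹ * B) * (1 - 2 ^ (δ - 1))⁻¹ := by
  set E := fun k : ℕ => toMeasurable μ {x | 2 ^ k * T < g x}
  have hE : ∀ k, μ (E k) ≤ K * (2 ^ k * T)⁻¹ * B := fun k => by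
    rw [measure_toMeasurable]; exact hweak _ (by positivity) (by finiteness)
  calc ∫⁻ x in S, g x ^ δ ∂μ
      ≤ ∫⁻ x in S, (T ^ δ + ∑' k, (E k).indicator (fun _ => (2 ^ (k + 1) * T) ^ δ) x) ∂μ :=
        lintegral_mono fun x =>
          rpow_le_add_tsum_indicator hδ0 hT0 hTtop (fun k => subset_toMeasurable _ _) x
    _ = T ^ δ * μ S + ∑' k, (2 ^ (k + 1) * T) ^ δ * μ.restrict S (E k) := by
        rw [lintegral_add_left measurable_const, setLIntegral_const, lintegral_tsum fun k =>
          (measurable_const.indicator (measurableSet_toMeasurable _ _)).aemeasurable]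
        simp_rw [lintegral_indicator_const (measurableSet_toMeasurable _ _)]
        rfl
    _ ≤ T ^ δ * μ S + ∑' k, (2 ^ (k + 1) * T) ^ δ * (K * (2 ^ k * T)⁻¹ * B) := by
        gcongr with k
        exact (Measure.restrict_apply_le _ _).trans (hE k)
    _ = _ := by
        rw [← ENNReal.tsum_geometric, ← ENNReal.tsum_mul_left]
        congr 1
        refine tsum_congr fun k => ?_
        rw [ENNReal.mul_rpow_of_nonneg _ _ hδ0.le, ENNReal.mul_inv (by simp) (by simp)]
        calc _ = ((2 ^ (k + 1)) ^ δ * (2 ^ k)⁻¹) * (K * T ^ δ * (T⁻¹ * B)) := by ring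
          _ = _ := by rw [two_pow_succ_rpow_mul_inv_two_pow]; ring

end Kolmogorov

local notation "𝔼" n:max => EuclideanSpace ℝ (Fin n)

variable {n : ℕ}

section Cubes

lemma mem_cube_self (x : 𝔼 n) {r : ℝ} (hr : 0 ≤ r) : x ∈ cube n x r :=
  fun i => by simpa using div_nonneg hr zero_le_two

lemma mem_cube_comm {x c : 𝔼 n} {r : ℝ} : x ∈ cube n c r ↔ c ∈ cube n x r := by
  simp only [cube, Set.mem_ofPred_eq, abs_sub_comm]

lemma cube_subset_cube {x c : 𝔼 n} {s r R : ℝ} (hx : x ∈ cube n c r) (h : s + r ≤ R) :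
    cube n x s ⊆ cube n c R := fun z hz i => by
  linarith [abs_sub_le (z i) (x i) (c i), hz i, hx i]

lemma cube_subset_cube_of_inter_nonempty {a b : 𝔼 n} {s q : ℝ}
    (h : (cube n a s ∩ cube n b q).Nonempty) (hsq : s ≤ 2 * q) :
    cube n a s ⊆ cube n b (5 * q) := by
  obtain ⟨z, hza, hzb⟩ := h
  exact (cube_subset_cube (mem_cube_comm.1 hza) le_rfl).trans
    (cube_subset_cube hzb (by linarith))

lemma isClosed_cube (c : 𝔼 n) (r : ℝ) : IsClosed (cube n c r) := by
  simp only [cube, Set.ofPred_forall]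
  exact isClosed_iInter fun i => isClosed_le (by fun_prop) continuous_const

lemma measurableSet_cube (c : 𝔼 n) (r : ℝ) : MeasurableSet (cube n c r) :=
  (isClosed_cube c r).measurableSet

lemma interior_cube_nonempty (c : 𝔼 n) {r : ℝ} (hr : 0 < r) :
    (interior (cube n c r)).Nonempty := by
  have hopen : IsOpen {x : 𝔼 n | ∀ i, |x i - c i| < r / 2} := by
    simp only [Set.ofPred_forall]
    exact isOpen_iInter_of_finite fun i => isOpen_lt (by fun_prop) continuous_const
  exact ⟨c, interior_maximal (fun x hx i => (hx i).le) hopen fun i => by simpa using hr⟩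

/-- In the sup-metric of `Fin n → ℝ` the cube is the closed ball of radius `r / 2`. -/
lemma volume_cube (c : 𝔼 n) {r : ℝ} (hr : 0 ≤ r) :
    volume (cube n c r) = ENNReal.ofReal r ^ n := by
  have hr2 : 0 ≤ r / 2 := div_nonneg hr zero_le_two
  have : cube n c r = WithLp.ofLp ⁻¹' Metric.closedBall (WithLp.ofLp c) (r / 2) := by
    ext x
    simp [cube, dist_pi_le_iff hr2, Real.dist_eq]
  rw [this, (PiLp.volume_preserving_ofLp _).measure_preimage
    measurableSet_closedBall.nullMeasurableSet, Real.volume_pi_closedBall _ hr2]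
  simp [mul_div_cancel₀ r two_ne_zero, ENNReal.ofReal_pow hr]

lemma cube_zero_eq_univ (c : 𝔼 0) (r : ℝ) : cube 0 c r = Set.univ :=
  Set.eq_univ_of_forall fun _ i => i.elim0

end Cubes

/-- The average over `cube n c r`, normalised by `r ^ n` as in the definition of `xMaximal`. -/
def cubeAvg (n : ℕ) (c : 𝔼 n) (r : ℝ) (g : 𝔼 n → ℝ≥0∞) : ℝ≥0∞ :=
  (ENNReal.ofReal (r ^ (n : ℝ)))⁻¹ * ∫⁻ x in cube n c r, g x

/-- `xMaximal n ρ w x t` unfolds to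
`maximalFn n (fun y => ENNReal.ofReal (|w (y, t)| ^ ρ)) x ^ (1 / ρ)`. -/
def maximalFn (n : ℕ) (g : 𝔼 n → ℝ≥0∞) (x : 𝔼 n) : ℝ≥0∞ :=
  ⨆ (s : ℝ) (_ : 0 < s), cubeAvg n x s g

section Averages

variable {c x y : 𝔼 n} {r s : ℝ} {f g : 𝔼 n → ℝ≥0∞}

lemma cubeAvg_eq (hr : 0 ≤ r) (g : 𝔼 n → ℝ≥0∞) :
    cubeAvg n c r g = (ENNReal.ofReal r ^ n)⁻¹ * ∫⁻ x in cube n c r, g x := by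
  rw [cubeAvg, Real.rpow_natCast, ENNReal.ofReal_pow hr]

lemma cubeAvg_mono (hfg : ∀ x ∈ cube n c r, f x ≤ g x) : cubeAvg n c r f ≤ cubeAvg n c r g :=
  mul_le_mul_right (setLIntegral_mono' (measurableSet_cube c r) hfg) _

lemma cubeAvg_const (hr : 0 < r) (a : ℝ≥0∞) : cubeAvg n c r (fun _ => a) = a := by
  rw [cubeAvg_eq hr.le, setLIntegral_const, volume_cube c hr.le, mul_comm,
    ENNReal.mul_inv_cancel_right (by positivity) (by finiteness)]

lemma cubeAvg_add_const (hr : 0 < r) (g : 𝔼 n → ℝ≥0∞) (a : ℝ≥0∞) :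
    cubeAvg n c r (fun x => g x + a) = cubeAvg n c r g + a := by
  rw [← cubeAvg_const (c := c) hr a, cubeAvg, lintegral_add_right _ measurable_const, mul_add,
    ← cubeAvg, ← cubeAvg, cubeAvg_const hr]

lemma cubeAvg_le_maximalFn (g : 𝔼 n → ℝ≥0∞) (x : 𝔼 n) (hs : 0 < s) :
    cubeAvg n x s g ≤ maximalFn n g x :=
  le_iSup₂_of_le s hs le_rfl

lemma setLIntegral_cube_le_mul_maximalFn (g : 𝔼 n → ℝ≥0∞) (x : 𝔼 n) (hs : 0 < s) :
    ∫⁻ y in cube n x s, g y ≤ ENNReal.ofReal s ^ n * maximalFn n g x := by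
  have h := cubeAvg_le_maximalFn g x hs
  rwa [cubeAvg_eq hs.le, ENNReal.inv_mul_le_iff (by positivity) (by finiteness)] at h

lemma setLIntegral_cube_le_mul_maximalFn_of_mem (hr : 0 < r) (hy : y ∈ cube n c r) :
    ∫⁻ x in cube n c (3 * r), f x ≤ (4 * ENNReal.ofReal r) ^ n * maximalFn n f y := by
  have hsub : cube n c (3 * r) ⊆ cube n y (4 * r) :=
    cube_subset_cube (mem_cube_comm.1 hy) (by linarith)
  calc ∫⁻ x in cube n c (3 * r), f x ≤ ∫⁻ x in cube n y (4 * r), f x := lintegral_mono_set hsub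
    _ ≤ _ := by
      rw [← ENNReal.ofReal_ofNat 4, ← ENNReal.ofReal_mul (by norm_num)]
      exact setLIntegral_cube_le_mul_maximalFn f y (by positivity)

end Averages

section Splitting

variable {c x y : 𝔼 n} {r : ℝ} {f : 𝔼 n → ℝ≥0∞}

lemma cubeAvg_le_cubeAvg_indicator_add {G : Set (𝔼 n)} (hG : MeasurableSet G)
    (f : 𝔼 n → ℝ≥0∞) (x : 𝔼 n) (s : ℝ) :
    cubeAvg n x s f ≤ cubeAvg n x s (G.indicator f) +
      (ENNReal.ofReal (s ^ (n : ℝ)))⁻¹ * ∫⁻ y in cube n x s \ G, f y := by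
  rw [cubeAvg, cubeAvg, setLIntegral_indicator hG, Set.inter_comm, ← mul_add]
  gcongr
  calc ∫⁻ y in cube n x s, f y = ∫⁻ y in (cube n x s ∩ G) ∪ (cube n x s \ G), f y := by
        rw [Set.inter_union_sdiff]
    _ ≤ _ := lintegral_union_le _ _ _

/-- Cubes around `x` that leave `cube n c (3 * r)` are larger than `cube n c r`, so their averages
are controlled by the maximal function at any point `y` of `cube n c r`. -/
lemma maximalFn_le_indicator_add (hx : x ∈ cube n c r) (hy : y ∈ cube n c r) :
    maximalFn n f x ≤
      maximalFn n ((cube n c (3 * r)).indicator f) x + 2 ^ n * maximalFn n f y := by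
  refine iSup₂_le fun s hs =>
    (cubeAvg_le_cubeAvg_indicator_add (measurableSet_cube c _) f x s).trans
      (add_le_add (cubeAvg_le_maximalFn _ x hs) ?_)
  rcases le_or_gt s (2 * r) with hs2 | hs2
  · rw [Set.sdiff_eq_empty.2 (cube_subset_cube hx (by linarith)), Measure.restrict_empty,
      lintegral_zero_measure, mul_zero]
    exact zero_le
  · have hxy : x ∈ cube n y (2 * r) :=
      cube_subset_cube (mem_cube_comm.1 hy) (by linarith) hx
    have hsub : cube n x s \ cube n c (3 * r) ⊆ cube n y (2 * s) :=
      Set.sdiff_subset.trans (cube_subset_cube hxy (by linarith))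
    calc (ENNReal.ofReal (s ^ (n : ℝ)))⁻¹ * ∫⁻ z in cube n x s \ cube n c (3 * r), f z
        ≤ (ENNReal.ofReal s ^ n)⁻¹ * ((2 * ENNReal.ofReal s) ^ n * maximalFn n f y) := by
          rw [Real.rpow_natCast, ENNReal.ofReal_pow hs.le]
          gcongr
          refine (lintegral_mono_set hsub).trans ?_
          have h := setLIntegral_cube_le_mul_maximalFn f y (mul_pos two_pos hs)
          rwa [ENNReal.ofReal_mul zero_le_two, ENNReal.ofReal_ofNat] at h
      _ = 2 ^ n * maximalFn n f y := by
          rw [mul_pow, mul_comm (2 ^ n), mul_assoc,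
            ENNReal.inv_mul_cancel_left (by positivity) (by finiteness)]

end Splitting

section WeakType

variable {g : 𝔼 n → ℝ≥0∞} {l : ℝ≥0∞}

lemma exists_radius_of_lt_maximalFn (hl0 : l ≠ 0) (hltop : l ≠ ⊤) (hg : ∫⁻ y, g y ≠ ⊤)
    {x : 𝔼 n} (h : l < maximalFn n g x) :
    ∃ s, 0 < s ∧ s ≤ max 1 (l⁻¹ * ∫⁻ y, g y).toReal ∧
      ENNReal.ofReal s ^ n ≤ l⁻¹ * ∫⁻ y in cube n x s, g y := by
  obtain ⟨s, hs, hls⟩ : ∃ s, 0 < s ∧ l < cubeAvg n x s g := by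
    simpa only [maximalFn, lt_iSup_iff, exists_prop] using h
  rw [cubeAvg_eq hs.le] at hls
  have hV := (ENNReal.mul_le_iff_le_inv hl0 hltop).1 <| mul_comm l _ ▸
    (ENNReal.mul_le_iff_le_inv (by positivity) (by finiteness)).2 hls.le
  rcases Nat.eq_zero_or_pos n with rfl | hn
  · refine ⟨1, one_pos, le_max_left _ _, ?_⟩
    simpa [cube_zero_eq_univ] using hV
  refine ⟨s, hs, ?_, hV⟩
  rcases le_or_gt s 1 with hs1 | hs1
  · exact hs1.trans (le_max_left _ _)
  have hsn : s ^ n ≤ (l⁻¹ * ∫⁻ y, g y).toReal := by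
    rw [← ENNReal.ofReal_le_iff_le_toReal (by finiteness), ENNReal.ofReal_pow hs.le]
    exact hV.trans (by gcongr; exact Measure.restrict_le_self)
  exact (le_self_pow₀ hs1.le hn.ne').trans (hsn.trans (le_max_right _ _))

theorem volume_lt_maximalFn_le (hl0 : l ≠ 0) (hltop : l ≠ ⊤) (hg : ∫⁻ y, g y ≠ ⊤) :
    volume {x | l < maximalFn n g x} ≤ 5 ^ n * l⁻¹ * ∫⁻ y, g y := by
  set R := max 1 (l⁻¹ * ∫⁻ y, g y).toReal
  set t : Set (𝔼 n × ℝ) := {p | 0 < p.2 ∧ p.2 ≤ R ∧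
    ENNReal.ofReal p.2 ^ n ≤ l⁻¹ * ∫⁻ y in cube n p.1 p.2, g y}
  obtain ⟨u, hut, hdisj, hcov⟩ := Vitali.exists_disjoint_subfamily_covering_enlargement
    (fun p => cube n p.1 p.2) t Prod.snd 2 one_lt_two (fun p hp => hp.1.le) R
    (fun p hp => hp.2.1) (fun p hp => ⟨p.1, mem_cube_self p.1 hp.1.le⟩)
  have : Countable u := (hdisj.countable_of_nonempty_interior fun p hp =>
    interior_cube_nonempty p.1 (hut hp).1).to_subtype
  have hcover : {x | l < maximalFn n g x} ⊆ ⋃ p : u, cube n p.1.1 (5 * p.1.2) := by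
    intro x hx
    obtain ⟨s, hs, hsR, hV⟩ := exists_radius_of_lt_maximalFn hl0 hltop hg hx
    obtain ⟨b, hbu, hint, hb⟩ := hcov (x, s) ⟨hs, hsR, hV⟩
    exact Set.mem_iUnion.2
      ⟨⟨b, hbu⟩, cube_subset_cube_of_inter_nonempty hint hb (mem_cube_self x hs.le)⟩
  have hdisj' : Pairwise (Function.onFun Disjoint fun p : u => cube n p.1.1 p.1.2) :=
    fun p q hpq => hdisj p.2 q.2 (Subtype.coe_injective.ne hpq)
  calc volume {x | l < maximalFn n g x}
      ≤ ∑' p : u, volume (cube n p.1.1 (5 * p.1.2)) :=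
        (measure_mono hcover).trans (measure_iUnion_le _)
    _ = ∑' p : u, 5 ^ n * ENNReal.ofReal p.1.2 ^ n := tsum_congr fun p => by
        have hp := (hut p.2).1
        rw [volume_cube _ (by positivity), ENNReal.ofReal_mul (by norm_num), mul_pow,
          ENNReal.ofReal_ofNat]
    _ ≤ ∑' p : u, 5 ^ n * (l⁻¹ * ∫⁻ y in cube n p.1.1 p.1.2, g y) :=
        ENNReal.tsum_le_tsum fun p => by gcongr; exact (hut p.2).2.2
    _ = 5 ^ n * l⁻¹ * ∫⁻ y in ⋃ p : u, cube n p.1.1 p.1.2, g y := by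
        rw [ENNReal.tsum_mul_left, ENNReal.tsum_mul_left,
          lintegral_iUnion (fun p => measurableSet_cube _ _) hdisj', mul_assoc]
    _ ≤ 5 ^ n * l⁻¹ * ∫⁻ y, g y := by gcongr; exact Measure.restrict_le_self

end WeakType

section CoifmanRochberg

variable {c y : 𝔼 n} {r δ : ℝ} {f g : 𝔼 n → ℝ≥0∞}

lemma maximalFn_eq_zero (hg : ∫⁻ y, g y = 0) (x : 𝔼 n) : maximalFn n g x = 0 :=
  nonpos_iff_eq_zero.1 <| iSup₂_le fun s _ => by
    rw [cubeAvg, nonpos_iff_eq_zero.1 ((setLIntegral_le_lintegral _ _).trans hg.le), mul_zero]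

theorem setLIntegral_maximalFn_rpow_le (hg : ∫⁻ y, g y ≠ ⊤) (hδ0 : 0 < δ) {S : Set (𝔼 n)}
    (hS0 : volume S ≠ 0) (hS : volume S ≠ ⊤) :
    ∫⁻ x in S, maximalFn n g x ^ δ ≤
      (1 + 5 ^ n * 2 ^ δ * (1 - 2 ^ (δ - 1))⁻¹) * ((∫⁻ y, g y) / volume S) ^ δ * volume S := by
  rcases eq_or_ne (∫⁻ y, g y) 0 with hg0 | hg0
  · simp [maximalFn_eq_zero hg0, ENNReal.zero_rpow_of_pos hδ0]
  have hT := setLIntegral_rpow_le_of_weakType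
    (fun l hl0 hltop => volume_lt_maximalFn_le hl0 hltop hg) hδ0 (S := S)
    (T := (∫⁻ y, g y) / volume S) (ENNReal.div_pos hg0 hS).ne' (ENNReal.div_ne_top hg hS0)
  rw [ENNReal.inv_div (Or.inr hg) (Or.inr hg0), ENNReal.div_mul_cancel hg0 hg] at hT
  exact hT.trans_eq (by ring)

def coifmanRochbergConst (n : ℕ) (δ : ℝ) : ℝ≥0∞ :=
  (1 + 5 ^ n * 2 ^ δ * (1 - 2 ^ (δ - 1))⁻¹) * (4 ^ n) ^ δ + (2 ^ n) ^ δ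

lemma coifmanRochbergConst_ne_zero (δ : ℝ) : coifmanRochbergConst n δ ≠ 0 := by
  simp [coifmanRochbergConst]

lemma coifmanRochbergConst_ne_top (hδ0 : 0 ≤ δ) (hδ1 : δ < 1) :
    coifmanRochbergConst n δ ≠ ⊤ := by
  have : (1 - (2 : ℝ≥0∞) ^ (δ - 1))⁻¹ ≠ ⊤ := ENNReal.inv_ne_top.2 <| (tsub_pos_of_lt <|
    ENNReal.rpow_lt_one_of_one_lt_of_neg one_lt_two (by linarith)).ne'
  unfold coifmanRochbergConst
  finiteness

theorem cubeAvg_maximalFn_rpow_le (hδ0 : 0 < δ) (hδ1 : δ ≤ 1) (hr : 0 < r)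
    (hy : y ∈ cube n c r) :
    cubeAvg n c r (fun x => maximalFn n f x ^ δ) ≤
      coifmanRochbergConst n δ * maximalFn n f y ^ δ := by
  set G := cube n c (3 * r)
  have hV0 : volume (cube n c r) ≠ 0 := by rw [volume_cube c hr.le]; positivity
  have hVtop : volume (cube n c r) ≠ ⊤ := by rw [volume_cube c hr.le]; finiteness
  rcases eq_or_ne (maximalFn n f y) ⊤ with htop | hfin
  · simp [htop, ENNReal.top_rpow_of_pos hδ0, ENNReal.mul_top (coifmanRochbergConst_ne_zero δ)]
  have hB : ∫⁻ x, G.indicator f x ≤ 4 ^ n * maximalFn n f y * volume (cube n c r) := by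
    rw [lintegral_indicator (measurableSet_cube _ _), volume_cube c hr.le, mul_right_comm,
      ← mul_pow]
    exact setLIntegral_cube_le_mul_maximalFn_of_mem hr hy
  have hBtop : ∫⁻ x, G.indicator f x ≠ ⊤ := ne_top_of_le_ne_top (by finiteness) hB
  have hlocal : cubeAvg n c r (fun x => maximalFn n (G.indicator f) x ^ δ) ≤
      (1 + 5 ^ n * 2 ^ δ * (1 - 2 ^ (δ - 1))⁻¹) * (4 ^ n * maximalFn n f y) ^ δ := by
    rw [cubeAvg_eq hr.le, ← volume_cube c hr.le, ENNReal.inv_mul_le_iff hV0 hVtop,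
      mul_comm (volume _)]
    refine (setLIntegral_maximalFn_rpow_le hBtop hδ0 hV0 hVtop).trans ?_
    gcongr
    exact (ENNReal.div_le_iff hV0 hVtop).2 hB
  calc cubeAvg n c r (fun x => maximalFn n f x ^ δ)
      ≤ cubeAvg n c r
          (fun x => maximalFn n (G.indicator f) x ^ δ + (2 ^ n * maximalFn n f y) ^ δ) :=
        cubeAvg_mono fun x hx => (ENNReal.rpow_le_rpow (maximalFn_le_indicator_add hx hy)
          hδ0.le).trans (ENNReal.rpow_add_le_add_rpow _ _ hδ0.le hδ1)
    _ ≤ (1 + 5 ^ n * 2 ^ δ * (1 - 2 ^ (δ - 1))⁻¹) * (4 ^ n * maximalFn n f y) ^ δ +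
          (2 ^ n * maximalFn n f y) ^ δ := by
        rw [cubeAvg_add_const hr]
        gcongr
    _ = coifmanRochbergConst n δ * maximalFn n f y ^ δ := by
        rw [coifmanRochbergConst, ENNReal.mul_rpow_of_nonneg _ _ hδ0.le,
          ENNReal.mul_rpow_of_nonneg _ _ hδ0.le]
        ring

end CoifmanRochberg

theorem cubeAvg_mul_cubeAvg_inv_le_of_A1 {c : 𝔼 n} {r : ℝ} {w : 𝔼 n → ℝ≥0∞} {C : ℝ≥0∞}
    (hr : 0 < r) (hw : ∀ y ∈ cube n c r, cubeAvg n c r w ≤ C * w y) :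
    cubeAvg n c r w * cubeAvg n c r (fun x => (w x)⁻¹) ≤ C :=
  calc cubeAvg n c r w * cubeAvg n c r (fun x => (w x)⁻¹)
      = (ENNReal.ofReal (r ^ (n : ℝ)))⁻¹ * (cubeAvg n c r w * ∫⁻ x in cube n c r, (w x)⁻¹) :=
        mul_left_comm _ _ _
    _ ≤ cubeAvg n c r (fun x => cubeAvg n c r w * (w x)⁻¹) :=
        mul_le_mul_right (lintegral_const_mul_le _ _) _
    _ ≤ cubeAvg n c r (fun _ => C) := cubeAvg_mono fun x hx =>
        (mul_le_mul_left (hw x hx) _).trans <| by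
          rw [mul_assoc]; exact mul_le_of_le_one_right' (ENNReal.mul_inv_le_one _)
    _ = C := cubeAvg_const hr C

end CubeMaximal

open CubeMaximal

theorem xMaximal_A2_uniform_general (n : ℕ) (ρ : ℝ) (hρ : 1 < ρ)
    (w : EuclideanSpace ℝ (Fin n) × ℝ → ℝ) :
    ∃ C > (0:ℝ), ∀ᵐ t : ℝ ∂volume, ∀ (c : EuclideanSpace ℝ (Fin n)) (r : ℝ), 0 < r →
      ((ENNReal.ofReal (r ^ (n : ℝ)))⁻¹ * ∫⁻ x in cube n c r, xMaximal n ρ w x t) *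
        ((ENNReal.ofReal (r ^ (n : ℝ)))⁻¹ * ∫⁻ x in cube n c r, (xMaximal n ρ w x t)⁻¹) ≤
      ENNReal.ofReal C := by
  have hδ0 : 0 < 1 / ρ := by positivity
  have hδ1 : 1 / ρ < 1 := (div_lt_one (by positivity)).2 hρ
  set C := coifmanRochbergConst n (1 / ρ)
  have hC : C ≠ ⊤ := coifmanRochbergConst_ne_top hδ0.le hδ1
  refine ⟨C.toReal + 1, by positivity, ae_of_all _ fun t c r hr => ?_⟩
  calc _ ≤ C := cubeAvg_mul_cubeAvg_inv_le_of_A1 hr fun y hy =>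
        cubeAvg_maximalFn_rpow_le hδ0 hδ1.le hr hy
    _ ≤ _ := (ENNReal.le_ofReal_iff_toReal_le hC (by positivity)).2 (by linarith)

/-- If `w ∈ 𝔏^{α,p}(ℝ^{n+1})` with `p > ρ > 1` and `p > 1/α`, then for a.e. `t` the
function `w_*(·,t)` is an `A₂(ℝⁿ)` weight with `A₂` constant uniform in `t`. -/
theorem xMaximal_A2_uniform (n : ℕ) (α p ρ : ℝ) (hα : 0 < α) (hρ : 1 < ρ)
    (hpρ : ρ < p) (hpα : 1 / α < p) (w : EuclideanSpace ℝ (Fin n) × ℝ → ℝ)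
    (hw : morreyNormP n α p w < ⊤) :
    ∃ C > (0:ℝ), ∀ᵐ t : ℝ ∂volume, ∀ (c : EuclideanSpace ℝ (Fin n)) (r : ℝ), 0 < r →
      ((ENNReal.ofReal (r ^ (n : ℝ)))⁻¹ * ∫⁻ x in cube n c r, xMaximal n ρ w x t) *
        ((ENNReal.ofReal (r ^ (n : ℝ)))⁻¹ * ∫⁻ x in cube n c r, (xMaximal n ρ w x t)⁻¹) ≤
      ENNReal.ofReal C :=
  xMaximal_A2_uniform_general n ρ hρ w
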